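/- For every natural number k, h(k) ≥ (2 + √2)^k · (2 − √2), as real numbers. -/

import Mathlib

/-- `hcomp k` is the sum over all compositions `c` of `k` of `∏_{p ∈ c.blocks} (p + 1)`;
in particular `hcomp 0 = 1`. -/
def hcomp (k : ℕ) : ℕ := ∑ c : Composition k, (c.blocks.map (· + 1)).prod

/-!
Splitting off the first block gives the recursion `h(n+1) = ∑_{j ≤ n} (j+2) h(n-j)`.
By strong induction, `h(m) ≥ (2-√2)(2+√2)^m` for `m ≥ 1` and `h(0) = 1`, so the recursion gives
`h(n+1) ≥ (n+2) + (2-√2) ∑_{j<n} (j+2)(2+√2)^(n-j)`. The geometric-type sum has closed form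
`(2+√2)^(n+1) - √2(n+1) - 2`, because `2+√2` is a root of `x² - 4x + 2`, and the bound becomes
`(2-√2)(2+√2)^(n+1) + (3-2√2) n`.
-/

open Finset

namespace Composition

instance : Subsingleton (Composition 0) :=
  ⟨fun c d => Composition.ext <| by rw [c.blocks_eq_nil.2 rfl, d.blocks_eq_nil.2 rfl]⟩

def consBlock {n : ℕ} (j : Fin (n + 1)) (c : Composition (n - j)) : Composition (n + 1) where
  blocks := (j + 1) :: c.blocks
  blocks_pos hi := by
    rcases List.mem_cons.1 hi with rfl | h
    · omega
    · exact c.blocks_pos h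
  blocks_sum := by
    have := j.isLt
    simp only [List.sum_cons, c.blocks_sum]
    omega

theorem consBlock_bijective (n : ℕ) :
    Function.Bijective fun x : Σ j : Fin (n + 1), Composition (n - j) => consBlock x.1 x.2 := by
  constructor
  · rintro ⟨j, c⟩ ⟨j', c'⟩ h
    obtain ⟨hj, hc⟩ := List.cons_eq_cons.1 (congrArg blocks h)
    dsimp only at hj hc
    obtain rfl : j = j' := Fin.ext (by omega)
    rw [Composition.ext hc]
  · intro c
    obtain ⟨a, l, hc⟩ := List.exists_cons_of_ne_nil (c.blocks_eq_nil.not.2 n.succ_ne_zero)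
    have ha : 1 ≤ a := c.one_le_blocks (hc ▸ List.mem_cons_self)
    have hsum : a + l.sum = n + 1 := by simpa [hc] using c.blocks_sum
    refine ⟨⟨⟨a - 1, by omega⟩, ⟨l, fun hi => c.blocks_pos (hc ▸ List.mem_cons_of_mem a hi), ?_⟩⟩, ?_⟩
    · simp only; omega
    · ext1; simp only [consBlock, hc]; congr 1; omega

theorem sum_prod_map_blocks_succ {R : Type*} [CommSemiring R] (f : ℕ → R) (n : ℕ) :
    ∑ c : Composition (n + 1), (c.blocks.map f).prod
      = ∑ j : Fin (n + 1), f (j + 1) * ∑ c : Composition (n - j), (c.blocks.map f).prod := by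
  calc ∑ c : Composition (n + 1), (c.blocks.map f).prod
      = ∑ x : Σ j : Fin (n + 1), Composition (n - j), ((consBlock x.1 x.2).blocks.map f).prod :=
        (Fintype.sum_bijective _ (consBlock_bijective n) _ _ fun _ => rfl).symm
    _ = _ := by simp [Fintype.sum_sigma, consBlock, mul_sum]

end Composition

theorem hcomp_zero : hcomp 0 = 1 :=
  Fintype.sum_subsingleton _ (Composition.ones 0)

theorem hcomp_succ (n : ℕ) :
    hcomp (n + 1) = ∑ j ∈ range (n + 1), (j + 2) * hcomp (n - j) :=
  (Composition.sum_prod_map_blocks_succ _ n).trans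
    (Fin.sum_univ_eq_sum_range (fun j => (j + 2) * hcomp (n - j)) (n + 1))

theorem sum_range_mul_two_add_sqrt_two_pow (n : ℕ) :
    ∑ j ∈ range n, ((j : ℝ) + 2) * (2 + √2) ^ (n - j) = (2 + √2) ^ (n + 1) - √2 * (n + 1) - 2 := by
  have h2 : √2 * √2 = 2 := Real.mul_self_sqrt zero_le_two
  induction n with
  | zero => simp
  | succ n ih =>
    have hshift : ∀ j ∈ range n, ((j : ℝ) + 2) * (2 + √2) ^ (n + 1 - j)
        = (2 + √2) * (((j : ℝ) + 2) * (2 + √2) ^ (n - j)) := by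
      intro j hj
      rw [Nat.sub_add_comm (mem_range.1 hj).le, pow_succ]
      ring
    rw [sum_range_succ, sum_congr rfl hshift, ← mul_sum, ih, Nat.add_sub_cancel_left]
    push_cast
    linear_combination (-(n : ℝ) - 1) * h2

/-- For every natural number `k`, `hcomp k ≥ (2 + √2)^k · (2 − √2)`. -/
theorem stmt_15 (k : ℕ) :
    (hcomp k : ℝ) ≥ (2 + Real.sqrt 2) ^ k * (2 - Real.sqrt 2) := by
  have h2 : √2 * √2 = 2 := Real.mul_self_sqrt zero_le_two
  have h32 : 2 * √2 ≤ 3 := by nlinarith [Real.sqrt_nonneg 2]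
  induction k using Nat.strong_induction_on with
  | _ k ih =>
    rcases k with _ | n
    · simp only [hcomp_zero, Nat.cast_one, pow_zero, one_mul]
      linarith [Real.one_lt_sqrt_two]
    have hlower : ∑ j ∈ range n, ((j : ℝ) + 2) * ((2 + √2) ^ (n - j) * (2 - √2))
        ≤ ∑ j ∈ range n, ((j : ℝ) + 2) * hcomp (n - j) :=
      sum_le_sum fun j _ =>
        mul_le_mul_of_nonneg_left (ih _ (Nat.lt_succ_of_le (n.sub_le j))) (by positivity)
    simp only [← mul_assoc, ← sum_mul, sum_range_mul_two_add_sqrt_two_pow] at hlower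
    rw [hcomp_succ, sum_range_succ, Nat.sub_self, hcomp_zero]
    push_cast
    nlinarith [mul_nonneg (sub_nonneg.2 h32) n.cast_nonneg]
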